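/- Let (b,o,c) be a magnetic Schrödinger graph over a discrete measure space (X,m) with Q(φ) ≥ 0 for all finitely supported φ, let d be an intrinsic pseudometric for b, and assume c is form bounded with bounds M, C ≥ 0, i.e., ∑_{x∈X} c₋(x)|φ(x)|² ≤ M·Q(φ) + C·∑_{x∈X} m(x)|φ(x)|² for all finitely supported φ. Let ψ : X → ℝ be bounded with |ψ(x) − ψ(y)| ≤ κ·d(x,y) for all x,y and some κ > 0. Then for every finitely supported f : X → ℂ: 0 ≤ Q(ψ·f) ≤ 2(κ² + C·‖ψ‖_∞²)·∑_{x∈X} m(x)|f(x)|² + 2(M+1)·‖ψ‖_∞²·Q(f). -/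

import Mathlib

private lemma abs_sq_add_le (u v : ℂ) :
    ‖u + v‖ ^ 2 ≤ 2 * ‖u‖ ^ 2 + 2 * ‖v‖ ^ 2 := by
  have h := norm_add_le u v
  nlinarith [norm_nonneg u, norm_nonneg v, norm_nonneg (u + v),
    sq_nonneg (‖u‖ - ‖v‖)]

private lemma sumLeft {X : Type*} (b : X → X → ℝ)
    (hb0 : ∀ x y, 0 ≤ b x y) (hbsum : ∀ x, Summable fun y => b x y)
    (g : X → ℝ) (hg0 : ∀ x, 0 ≤ g x) (hg : (Function.support g).Finite) :
    Summable fun z : X × X => b z.1 z.2 * g z.1 := by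
  rw [summable_prod_of_nonneg (fun z => mul_nonneg (hb0 _ _) (hg0 _))]
  refine ⟨fun x => (hbsum x).mul_right (g x), ?_⟩
  apply summable_of_ne_finset_zero (s := hg.toFinset)
  intro x hx
  have hgx : g x = 0 := by
    by_contra h; exact hx (hg.mem_toFinset.2 h)
  simp [hgx]

private lemma sumRight {X : Type*} (b : X → X → ℝ)
    (hb0 : ∀ x y, 0 ≤ b x y) (hbcol : ∀ y, Summable fun x => b x y)
    (g : X → ℝ) (hg0 : ∀ x, 0 ≤ g x) (hg : (Function.support g).Finite) :
    Summable fun z : X × X => b z.1 z.2 * g z.2 := by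
  rw [summable_prod_of_nonneg (fun z => mul_nonneg (hb0 _ _) (hg0 _))]
  constructor
  · intro x
    apply summable_of_ne_finset_zero (s := hg.toFinset)
    intro y hy
    have hgy : g y = 0 := by by_contra h; exact hy (hg.mem_toFinset.2 h)
    simp [hgy]
  · have hrow : ∀ x, (∑' y, b x y * g y) = ∑ y ∈ hg.toFinset, b x y * g y := by
      intro x
      apply tsum_eq_sum
      intro y hy
      have hgy : g y = 0 := by by_contra h; exact hy (hg.mem_toFinset.2 h)
      simp [hgy]
    simp only [hrow]
    exact summable_sum fun y _ => (hbcol y).mul_right (g y)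

private lemma tsumRightEval {X : Type*} (b : X → X → ℝ)
    (hb0 : ∀ x y, 0 ≤ b x y) (hbcol : ∀ y, Summable fun x => b x y)
    (g : X → ℝ) (hg0 : ∀ x, 0 ≤ g x) (hg : (Function.support g).Finite) :
    ∑' z : X × X, b z.1 z.2 * g z.2 = ∑ y ∈ hg.toFinset, (∑' x, b x y) * g y := by
  have hsum := sumRight b hb0 hbcol g hg0 hg
  have hrows : ∀ x, Summable fun y => b x y * g y := by
    intro x
    apply summable_of_ne_finset_zero (s := hg.toFinset)
    intro y hy
    have hgy : g y = 0 := by by_contra h; exact hy (hg.mem_toFinset.2 h)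
    simp [hgy]
  rw [Summable.tsum_prod' hsum hrows]
  have hrow : ∀ x, (∑' y, b x y * g y) = ∑ y ∈ hg.toFinset, b x y * g y := by
    intro x
    apply tsum_eq_sum
    intro y hy
    have hgy : g y = 0 := by by_contra h; exact hy (hg.mem_toFinset.2 h)
    simp [hgy]
  simp only [hrow]
  rw [Summable.tsum_finsetSum fun y _ => (hbcol y).mul_right (g y)]
  exact Finset.sum_congr rfl fun y _ => tsum_mul_right

private lemma energySummable {X : Type*} (b : X → X → ℝ)
    (hb0 : ∀ x y, 0 ≤ b x y) (hbsymm : ∀ x y, b x y = b y x)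
    (hbsum : ∀ x, Summable fun y => b x y)
    (o : X → X → ℂ) (ho1 : ∀ x y, ‖o x y‖ = 1)
    (φ : X → ℂ) (hφ : (Function.support φ).Finite) :
    Summable fun z : X × X => b z.1 z.2 * ‖φ z.1 - o z.1 z.2 * φ z.2‖ ^ 2 := by
  have hg0 : ∀ x, 0 ≤ 2 * ‖φ x‖ ^ 2 := fun x => mul_nonneg (by norm_num) (sq_nonneg _)
  have hgs : (Function.support fun x => 2 * ‖φ x‖ ^ 2).Finite := by
    apply hφ.subset
    intro x hx
    simp only [Function.mem_support] at hx ⊢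
    intro h; exact hx (by simp [h])
  have h1 := sumLeft b hb0 hbsum _ hg0 hgs
  have h2 := sumRight b hb0 (fun y => (hbsum y).congr fun x => hbsymm y x) _ hg0 hgs
  apply Summable.of_nonneg_of_le (fun z => mul_nonneg (hb0 _ _) (sq_nonneg _)) ?_ (h1.add h2)
  intro z
  have key : ‖φ z.1 - o z.1 z.2 * φ z.2‖ ^ 2 ≤
      2 * ‖φ z.1‖ ^ 2 + 2 * ‖φ z.2‖ ^ 2 := by
    have h := abs_sq_add_le (φ z.1) (-(o z.1 z.2 * φ z.2))
    rw [← sub_eq_add_neg, norm_neg, norm_mul, ho1, one_mul] at h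
    exact h
  have hb := hb0 z.1 z.2
  nlinarith [key, norm_nonneg (φ z.1 - o z.1 z.2 * φ z.2)]


/-- The quadratic form of a magnetic Schrödinger graph:
`Q(φ) = (1/2)∑_{x,y} b(x,y)|φ(x) − o(x,y)φ(y)|² + ∑_x c(x)|φ(x)|²`. -/
noncomputable def QrForm {X : Type*} (b : X → X → ℝ) (o : X → X → ℂ) (c : X → ℝ)
    (φ : X → ℂ) : ℝ :=
  1 / 2 * ∑' z : X × X, b z.1 z.2 * ‖φ z.1 - o z.1 z.2 * φ z.2‖ ^ 2 +
    ∑' x, c x * ‖φ x‖ ^ 2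

/-- If `Q ≥ 0` on finitely supported functions, `d` is an intrinsic
pseudometric, and `c` is form bounded with bounds `M, C ≥ 0`, then for any bounded
`κ`-Lipschitz function `ψ` (with `|ψ| ≤ B`) and finitely supported `f`:
`0 ≤ Q(ψ·f) ≤ 2(κ² + C·‖ψ‖_∞²)·∑ m|f|² + 2(M+1)·‖ψ‖_∞²·Q(f)`. -/
theorem stmt11 {X : Type*} [Countable X]
    (m : X → ℝ) (hm : ∀ x, 0 < m x)
    (b : X → X → ℝ) (hb0 : ∀ x y, 0 ≤ b x y) (hbsymm : ∀ x y, b x y = b y x)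
    (hbdiag : ∀ x, b x x = 0) (hbsum : ∀ x, Summable fun y => b x y)
    (o : X → X → ℂ) (ho1 : ∀ x y, ‖o x y‖ = 1)
    (hosymm : ∀ x y, o x y = starRingEnd ℂ (o y x))
    (c : X → ℝ)
    (hQpos : ∀ φ : X → ℂ, (Function.support φ).Finite → 0 ≤ QrForm b o c φ)
    (d : X → X → ℝ) (hd_self : ∀ x, d x x = 0) (hd_symm : ∀ x y, d x y = d y x)
    (hd_tri : ∀ x y z, d x z ≤ d x y + d y z)
    (hd_sum : ∀ x, Summable fun y => b x y * d x y ^ 2)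
    (hd_intr : ∀ x, (∑' y, b x y * d x y ^ 2) ≤ m x)
    (M C : ℝ) (hM : 0 ≤ M) (hC : 0 ≤ C)
    (hfb : ∀ φ : X → ℂ, (Function.support φ).Finite →
      (∑' x, max (-c x) 0 * ‖φ x‖ ^ 2) ≤
        M * QrForm b o c φ + C * ∑' x, m x * ‖φ x‖ ^ 2)
    (ψ : X → ℝ) (κ : ℝ) (hκ : 0 < κ) (hlip : ∀ x y, |ψ x - ψ y| ≤ κ * d x y)
    (B : ℝ) (hB : ∀ x, |ψ x| ≤ B)
    (f : X → ℂ) (hf : (Function.support f).Finite) :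
    0 ≤ QrForm b o c (fun x => (ψ x : ℂ) * f x) ∧
      QrForm b o c (fun x => (ψ x : ℂ) * f x) ≤
        2 * (κ ^ 2 + C * B ^ 2) * (∑' x, m x * ‖f x‖ ^ 2) +
          2 * (M + 1) * B ^ 2 * QrForm b o c f := by
  classical
  have hd0 : ∀ x y, 0 ≤ d x y := by
    intro x y
    have h := hd_tri x y x
    rw [hd_self, hd_symm y x] at h
    linarith
  have hψB : ∀ x, ψ x ^ 2 ≤ B ^ 2 := by
    intro x
    have h := hB x
    nlinarith [abs_nonneg (ψ x), sq_abs (ψ x)]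
  set φ : X → ℂ := fun x => (ψ x : ℂ) * f x with hφdef
  have hφf : (Function.support φ).Finite := by
    apply hf.subset
    intro x hx
    simp only [Function.mem_support, hφdef] at hx ⊢
    intro h; exact hx (by simp [h])
  refine ⟨hQpos φ hφf, ?_⟩
  set S : Finset X := hf.toFinset with hSdef
  have hfS : ∀ x ∉ S, f x = 0 := by
    intro x hx; by_contra h; exact hx (hf.mem_toFinset.2 h)
  have habsφ : ∀ x, ‖φ x‖ ^ 2 = ψ x ^ 2 * ‖f x‖ ^ 2 := by
    intro x
    simp only [hφdef, norm_mul, Complex.norm_real, Real.norm_eq_abs, mul_pow, sq_abs]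
  have Sg0 := energySummable b hb0 hbsymm hbsum o ho1 f hf
  have Sgψ := energySummable b hb0 hbsymm hbsum o ho1 φ hφf
  have hfs0 : ∀ x, 0 ≤ ‖f x‖ ^ 2 := fun x => sq_nonneg _
  have hfss : (Function.support fun x => ‖f x‖ ^ 2).Finite := by
    apply hf.subset
    intro x hx
    simp only [Function.mem_support] at hx ⊢
    intro h; exact hx (by simp [h])
  have hb'0 : ∀ x y, 0 ≤ b x y * d x y ^ 2 := fun x y => mul_nonneg (hb0 x y) (sq_nonneg _)
  have hb'col : ∀ y, Summable fun x => b x y * d x y ^ 2 :=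
    fun y => (hd_sum y).congr fun x => by rw [hbsymm y x, hd_symm y x]
  have Sg2maj : Summable fun z : X × X => (b z.1 z.2 * d z.1 z.2 ^ 2) * ‖f z.2‖ ^ 2 :=
    sumRight (fun x y => b x y * d x y ^ 2) hb'0 hb'col
      (fun x => ‖f x‖ ^ 2) hfs0 hfss
  have Sg1 : Summable fun z : X × X =>
      b z.1 z.2 * (ψ z.1 ^ 2 * ‖f z.1 - o z.1 z.2 * f z.2‖ ^ 2) := by
    apply Summable.of_nonneg_of_le
      (fun z => mul_nonneg (hb0 _ _) (mul_nonneg (sq_nonneg _) (sq_nonneg _)))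
      ?_ (Sg0.mul_left (B ^ 2))
    intro z
    have h1 := hψB z.1
    nlinarith [mul_nonneg (mul_nonneg (sub_nonneg.2 h1) (hb0 z.1 z.2))
      (sq_nonneg (‖f z.1 - o z.1 z.2 * f z.2‖))]
  have hlipsq : ∀ x y, (ψ x - ψ y) ^ 2 ≤ κ ^ 2 * d x y ^ 2 := by
    intro x y
    have h := hlip x y
    nlinarith [abs_nonneg (ψ x - ψ y), sq_abs (ψ x - ψ y), hd0 x y, hκ.le,
      mul_nonneg hκ.le (hd0 x y)]
  have Sg2 : Summable fun z : X × X =>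
      b z.1 z.2 * ((ψ z.1 - ψ z.2) ^ 2 * ‖f z.2‖ ^ 2) := by
    apply Summable.of_nonneg_of_le
      (fun z => mul_nonneg (hb0 _ _) (mul_nonneg (sq_nonneg _) (sq_nonneg _)))
      ?_ (Sg2maj.mul_left (κ ^ 2))
    intro z
    have h1 := hlipsq z.1 z.2
    nlinarith [mul_nonneg (mul_nonneg (sub_nonneg.2 h1) (hb0 z.1 z.2)) (hfs0 z.2)]
  have hsplit : ∀ z : X × X,
      b z.1 z.2 * ‖φ z.1 - o z.1 z.2 * φ z.2‖ ^ 2 ≤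
      2 * (b z.1 z.2 * (ψ z.1 ^ 2 * ‖f z.1 - o z.1 z.2 * f z.2‖ ^ 2)) +
      2 * (b z.1 z.2 * ((ψ z.1 - ψ z.2) ^ 2 * ‖f z.2‖ ^ 2)) := by
    intro z
    obtain ⟨x, y⟩ := z
    have hdec : φ x - o x y * φ y =
        (ψ x : ℂ) * (f x - o x y * f y) + ((ψ x : ℂ) - (ψ y : ℂ)) * (o x y * f y) := by
      simp only [hφdef]; ring
    have h := abs_sq_add_le ((ψ x : ℂ) * (f x - o x y * f y))
      (((ψ x : ℂ) - (ψ y : ℂ)) * (o x y * f y))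
    rw [← hdec] at h
    have hu : ‖(ψ x : ℂ) * (f x - o x y * f y)‖ ^ 2
        = ψ x ^ 2 * ‖f x - o x y * f y‖ ^ 2 := by
      rw [norm_mul, Complex.norm_real, Real.norm_eq_abs, mul_pow, sq_abs]
    have hv : ‖((ψ x : ℂ) - (ψ y : ℂ)) * (o x y * f y)‖ ^ 2
        = (ψ x - ψ y) ^ 2 * ‖f y‖ ^ 2 := by
      rw [norm_mul, norm_mul, ho1, one_mul]
      have hcast : ((ψ x : ℂ) - (ψ y : ℂ)) = ((ψ x - ψ y : ℝ) : ℂ) := by push_cast; ring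
      rw [hcast, Complex.norm_real, Real.norm_eq_abs, mul_pow, sq_abs]
    rw [hu, hv] at h
    have hb := hb0 x y
    nlinarith [sq_nonneg (‖φ x - o x y * φ y‖)]
  have hE1 : (∑' z : X × X, b z.1 z.2 * ‖φ z.1 - o z.1 z.2 * φ z.2‖ ^ 2) ≤
      2 * (∑' z : X × X, b z.1 z.2 * (ψ z.1 ^ 2 * ‖f z.1 - o z.1 z.2 * f z.2‖ ^ 2)) +
      2 * (∑' z : X × X, b z.1 z.2 * ((ψ z.1 - ψ z.2) ^ 2 * ‖f z.2‖ ^ 2)) := by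
    have h := Summable.tsum_le_tsum hsplit Sgψ ((Sg1.mul_left 2).add (Sg2.mul_left 2))
    rwa [Summable.tsum_add (Sg1.mul_left 2) (Sg2.mul_left 2), tsum_mul_left, tsum_mul_left] at h
  have hE2 : (∑' z : X × X, b z.1 z.2 * (ψ z.1 ^ 2 * ‖f z.1 - o z.1 z.2 * f z.2‖ ^ 2)) ≤
      B ^ 2 * ∑' z : X × X, b z.1 z.2 * ‖f z.1 - o z.1 z.2 * f z.2‖ ^ 2 := by
    rw [← tsum_mul_left]
    apply Summable.tsum_le_tsum ?_ Sg1 (Sg0.mul_left (B ^ 2))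
    intro z
    have h1 := hψB z.1
    nlinarith [mul_nonneg (mul_nonneg (sub_nonneg.2 h1) (hb0 z.1 z.2))
      (sq_nonneg (‖f z.1 - o z.1 z.2 * f z.2‖))]
  have hMfS : (∑' x, m x * ‖f x‖ ^ 2)
      = ∑ x ∈ hfss.toFinset, m x * ‖f x‖ ^ 2 := by
    apply tsum_eq_sum
    intro x hx
    have h0 : ‖f x‖ ^ 2 = 0 := by
      by_contra h; exact hx (hfss.mem_toFinset.2 h)
    simp [h0]
  have hE3 : (∑' z : X × X, b z.1 z.2 * ((ψ z.1 - ψ z.2) ^ 2 * ‖f z.2‖ ^ 2)) ≤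
      κ ^ 2 * ∑' x, m x * ‖f x‖ ^ 2 := by
    have step2 : (∑' z : X × X, (b z.1 z.2 * d z.1 z.2 ^ 2) * ‖f z.2‖ ^ 2) ≤
        ∑' x, m x * ‖f x‖ ^ 2 :=
      calc (∑' z : X × X, (b z.1 z.2 * d z.1 z.2 ^ 2) * ‖f z.2‖ ^ 2)
          = ∑ y ∈ hfss.toFinset, (∑' x, b x y * d x y ^ 2) * ‖f y‖ ^ 2 :=
            tsumRightEval (fun x y => b x y * d x y ^ 2) hb'0 hb'col
              (fun x => ‖f x‖ ^ 2) hfs0 hfss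
        _ ≤ ∑ y ∈ hfss.toFinset, m y * ‖f y‖ ^ 2 := by
            apply Finset.sum_le_sum
            intro y _
            have hcol : (∑' x, b x y * d x y ^ 2) ≤ m y := by
              have hc : (∑' x, b x y * d x y ^ 2) = ∑' x, b y x * d y x ^ 2 :=
                tsum_congr fun x => by rw [hbsymm x y, hd_symm x y]
              rw [hc]; exact hd_intr y
            exact mul_le_mul_of_nonneg_right hcol (hfs0 y)
        _ = ∑' x, m x * ‖f x‖ ^ 2 := hMfS.symm
    have step1 : (∑' z : X × X, b z.1 z.2 * ((ψ z.1 - ψ z.2) ^ 2 * ‖f z.2‖ ^ 2)) ≤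
        κ ^ 2 * ∑' z : X × X, (b z.1 z.2 * d z.1 z.2 ^ 2) * ‖f z.2‖ ^ 2 := by
      rw [← tsum_mul_left]
      apply Summable.tsum_le_tsum ?_ Sg2 (Sg2maj.mul_left (κ ^ 2))
      intro z
      have h1 := hlipsq z.1 z.2
      nlinarith [mul_nonneg (mul_nonneg (sub_nonneg.2 h1) (hb0 z.1 z.2)) (hfs0 z.2)]
    calc _ ≤ κ ^ 2 * ∑' z : X × X, (b z.1 z.2 * d z.1 z.2 ^ 2) * ‖f z.2‖ ^ 2 := step1
      _ ≤ κ ^ 2 * ∑' x, m x * ‖f x‖ ^ 2 :=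
          mul_le_mul_of_nonneg_left step2 (sq_nonneg κ)
  have hCψeq : (∑' x, c x * ‖φ x‖ ^ 2) = ∑ x ∈ S, c x * ‖φ x‖ ^ 2 := by
    apply tsum_eq_sum
    intro x hx
    simp [hφdef, hfS x hx]
  have hCfeq : (∑' x, c x * ‖f x‖ ^ 2) = ∑ x ∈ S, c x * ‖f x‖ ^ 2 := by
    apply tsum_eq_sum
    intro x hx
    simp [hfS x hx]
  have hCnegeq : (∑' x, max (-c x) 0 * ‖f x‖ ^ 2)
      = ∑ x ∈ S, max (-c x) 0 * ‖f x‖ ^ 2 := by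
    apply tsum_eq_sum
    intro x hx
    simp [hfS x hx]
  have hC4 : (∑' x, c x * ‖φ x‖ ^ 2) ≤
      2 * B ^ 2 * (∑' x, c x * ‖f x‖ ^ 2) +
      2 * B ^ 2 * (∑' x, max (-c x) 0 * ‖f x‖ ^ 2) := by
    rw [hCψeq, hCfeq, hCnegeq, Finset.mul_sum, Finset.mul_sum, ← Finset.sum_add_distrib]
    apply Finset.sum_le_sum
    intro x _
    rw [habsφ x]
    rcases le_or_gt 0 (c x) with h | h
    · have hmax : max (-c x) 0 = 0 := max_eq_right (by linarith)
      rw [hmax]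
      nlinarith [hψB x, mul_nonneg h (hfs0 x), sq_nonneg B]
    · have hmax : max (-c x) 0 = -c x := max_eq_left (by linarith)
      rw [hmax]
      nlinarith [mul_nonneg (sq_nonneg (ψ x)) (hfs0 x), h.le]
  have h6 := hfb f hf
  have hQfeq : QrForm b o c f = 1 / 2 *
      (∑' z : X × X, b z.1 z.2 * ‖f z.1 - o z.1 z.2 * f z.2‖ ^ 2) +
      ∑' x, c x * ‖f x‖ ^ 2 := rfl
  have hQψeq : QrForm b o c φ = 1 / 2 *
      (∑' z : X × X, b z.1 z.2 * ‖φ z.1 - o z.1 z.2 * φ z.2‖ ^ 2) +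
      ∑' x, c x * ‖φ x‖ ^ 2 := rfl
  have hQf0 : 0 ≤ QrForm b o c f := hQpos f hf
  have hMf0 : 0 ≤ ∑' x, m x * ‖f x‖ ^ 2 :=
    tsum_nonneg fun x => mul_nonneg (hm x).le (hfs0 x)
  have hT0 : (∑' z : X × X, b z.1 z.2 * ‖f z.1 - o z.1 z.2 * f z.2‖ ^ 2)
      = 2 * QrForm b o c f - 2 * ∑' x, c x * ‖f x‖ ^ 2 := by
    rw [hQfeq]; ring
  have hE2' : (∑' z : X × X,
        b z.1 z.2 * (ψ z.1 ^ 2 * ‖f z.1 - o z.1 z.2 * f z.2‖ ^ 2)) ≤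
      2 * B ^ 2 * QrForm b o c f - 2 * B ^ 2 * ∑' x, c x * ‖f x‖ ^ 2 :=
    calc (∑' z : X × X,
        b z.1 z.2 * (ψ z.1 ^ 2 * ‖f z.1 - o z.1 z.2 * f z.2‖ ^ 2))
        ≤ B ^ 2 * ∑' z : X × X,
            b z.1 z.2 * ‖f z.1 - o z.1 z.2 * f z.2‖ ^ 2 := hE2
      _ = 2 * B ^ 2 * QrForm b o c f - 2 * B ^ 2 * ∑' x, c x * ‖f x‖ ^ 2 := by
          rw [hT0]; ring
  have h6' : 2 * B ^ 2 * (∑' x, max (-c x) 0 * ‖f x‖ ^ 2) ≤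
      2 * B ^ 2 * (M * QrForm b o c f + C * ∑' x, m x * ‖f x‖ ^ 2) :=
    mul_le_mul_of_nonneg_left h6 (by positivity)
  rw [hQψeq]
  nlinarith [hE1, hE2', hE3, hC4, h6', mul_nonneg (sq_nonneg κ) hMf0]
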